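/- arXiv:2308.00001 — 5 statements merged into one kernel-verified Lean document; each statement's English description precedes it below -/
import Mathlib

section
/- In the model M1, for every formula φ of the language Φ (with single propositional variable p and single name Ann), if the truth set [φ] belongs to the family {[p], [⊥], [¬p], [⊤]}, then the truth set [R_Ann φ] also belongs to the family {[p], [⊥], [¬p], [⊤]}. -/
/-- Formulas of the language Φ: φ ::= p | ¬φ | φ∨φ | @ₙφ | Rₙφ | Dₙφ,
where `P` is the type of propositional variables and `N` the type of names. -/
inductive Formula (P N : Type) : Type
  | var : P → Formula P N
  | neg : Formula P N → Formula P N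
  | disj : Formula P N → Formula P N → Formula P N
  | at_ : N → Formula P N → Formula P N
  | re : N → Formula P N → Formula P N
  | de : N → Formula P N → Formula P N

/-- An epistemic model with extensions. -/
structure Model (P N : Type) where
  W : Type
  A : Type
  sim : A → W → W → Prop
  sim_equiv : ∀ a, Equivalence (sim a)
  ext : W → N → A
  val : P → Set (W × A)

/-- The satisfaction relation `w, a ⊨ φ`. -/
def Model.sat {P N : Type} (M : Model P N) : Formula P N → M.W → M.A → Prop
  | .var p, w, a => (w, a) ∈ M.val p
  | .neg φ, w, a => ¬ M.sat φ w a
  | .disj φ ψ, w, a => M.sat φ w a ∨ M.sat ψ w a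
  | .at_ n φ, w, _ => M.sat φ w (M.ext w n)
  | .re n φ, w, a => ∀ u, M.sim a w u → M.sat φ u (M.ext w n)
  | .de n φ, w, a => ∀ u, M.sim a w u → M.sat φ u (M.ext u n)

/-- The truth set ⟦φ⟧ of a formula. -/
def Model.truthSet {P N : Type} (M : Model P N) (φ : Formula P N) : Set (M.W × M.A) :=
  {x | M.sat φ x.1 x.2}

/-- The model M1: worlds w=0, u=1, v=2, t=3; agents a=0, b=1;
each agent only fails to distinguish w from u and v from t;
Ann refers to a in w,v and to b in u,t; π(p) = {(w,a),(u,b),(v,b),(t,a)}. -/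
def M1 : Model Unit Unit where
  W := Fin 4
  A := Fin 2
  sim := fun _ s t => (s : ℕ) / 2 = (t : ℕ) / 2
  sim_equiv := fun _ => ⟨fun _ => rfl, Eq.symm, Eq.trans⟩
  ext := fun w _ => if (w : ℕ) % 2 = 0 then 0 else 1
  val := fun _ => {((0 : Fin 4), (0 : Fin 2)), (1, 1), (2, 1), (3, 0)}

/-- The family of truth sets {⟦p⟧, ⟦⊥⟧, ⟦¬p⟧, ⟦⊤⟧} in M1 (⟦⊥⟧ = ∅, ⟦⊤⟧ = W×A). -/
def Fam1 : Set (Set (M1.W × M1.A)) :=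
  {M1.truthSet (.var ()), ∅, M1.truthSet (.neg (.var ())), Set.univ}

/-! At `(w, a)`, `R_Ann φ` reads `φ` at one fixed agent across the whole class of `w`, so it
fails everywhere once every class refutes `φ` at every agent. Each class of `M1` contains, for
every agent, both a `p`-world and a `¬p`-world, so this happens for `p` and `¬p`, and trivially
for `⊥`; `R_Ann ⊤` holds everywhere. -/

namespace Model

variable {P N : Type} (M : Model P N)

theorem truthSet_re_eq_empty (n : N) {φ : Formula P N}
    (h : ∀ a w x, ∃ u, M.sim a w u ∧ (u, x) ∉ M.truthSet φ) :
    M.truthSet (.re n φ) = ∅ := by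
  refine Set.eq_empty_of_forall_notMem fun ⟨w, a⟩ hre => ?_
  obtain ⟨u, hwu, hu⟩ := h a w (M.ext w n)
  exact hu (hre u hwu)

theorem truthSet_re_eq_empty_of_truthSet_eq_empty (n : N) {φ : Formula P N}
    (h : M.truthSet φ = ∅) : M.truthSet (.re n φ) = ∅ :=
  M.truthSet_re_eq_empty n fun a w _ => ⟨w, (M.sim_equiv a).refl w, by simp [h]⟩

theorem truthSet_re_eq_univ_of_truthSet_eq_univ (n : N) {φ : Formula P N}
    (h : M.truthSet φ = Set.univ) : M.truthSet (.re n φ) = Set.univ :=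
  Set.eq_univ_of_forall fun _ u _ => Set.eq_univ_iff_forall.1 h (u, _)

end Model

theorem M1_sim_iff (a : Fin 2) (w u : Fin 4) : M1.sim a w u ↔ (w : ℕ) / 2 = (u : ℕ) / 2 := Iff.rfl

theorem M1_sat_var_iff (w : Fin 4) (x : Fin 2) :
    M1.sat (.var ()) w x ↔ (w, x) ∈ ({(0, 0), (1, 1), (2, 1), (3, 0)} : Set (Fin 4 × Fin 2)) :=
  Iff.rfl

theorem M1_exists_sim_sat_var_and_exists_sim_not_sat_var (a : Fin 2) (w : Fin 4) (x : Fin 2) :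
    (∃ u : Fin 4, M1.sim a w u ∧ M1.sat (.var ()) u x) ∧
      ∃ u : Fin 4, M1.sim a w u ∧ ¬ M1.sat (.var ()) u x := by
  revert a w x
  simp only [M1_sim_iff, M1_sat_var_iff]
  decide

/-- In M1, if ⟦φ⟧ ∈ {⟦p⟧, ⟦⊥⟧, ⟦¬p⟧, ⟦⊤⟧}, then
⟦R_Ann φ⟧ ∈ {⟦p⟧, ⟦⊥⟧, ⟦¬p⟧, ⟦⊤⟧}. -/
theorem re_closed_in_M1 (φ : Formula Unit Unit) (h : M1.truthSet φ ∈ Fam1) :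
    M1.truthSet (.re () φ) ∈ Fam1 := by
  have hsplit := M1_exists_sim_sat_var_and_exists_sim_not_sat_var
  rcases h with h | h | h | h
  · refine Or.inr (Or.inl (M1.truthSet_re_eq_empty () fun a w x => ?_))
    rw [h]
    exact (hsplit a w x).2
  · exact Or.inr (Or.inl (M1.truthSet_re_eq_empty_of_truthSet_eq_empty () h))
  · refine Or.inr (Or.inl (M1.truthSet_re_eq_empty () fun a w x => ?_))
    obtain ⟨u, hwu, hpu⟩ := (hsplit a w x).1
    exact ⟨u, hwu, h ▸ not_not_intro hpu⟩
  · exact Or.inr (Or.inr (Or.inr (M1.truthSet_re_eq_univ_of_truthSet_eq_univ () h)))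
end

section
/- In the model M1, for every formula φ of the language Φ (with single propositional variable p and single name Ann) that does not use the modalities D and @, the truth set [φ] belongs to the family {[p], [⊥], [¬p], [⊤]}. -/
/-- A formula does not use the modalities D and @. -/
def Formula.noDeAt {P N : Type} : Formula P N → Prop
  | .var _ => True
  | .neg φ => φ.noDeAt
  | .disj φ ψ => φ.noDeAt ∧ ψ.noDeAt
  | .at_ _ _ => False
  | .re _ φ => φ.noDeAt
  | .de _ _ => False

/-!
In `M1` every agent at a world `s` considers possible exactly the two worlds of the class
of `s`, and the valuation is chosen so that `p` holds of `e_s(Ann)` at one of them and fails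
at the other. Hence `R_Ann p` and `R_Ann ¬p` are both empty, while
`R_Ann` fixes `∅` and (by reflexivity) `W × A`. So the Boolean algebra `{[p], ∅, [¬p], ⊤}`
is closed under `¬`, `∨` and `R_Ann`, and the claim follows by induction on `φ`.
-/

open Set

namespace Model

variable {P N : Type} (M : Model P N)

-- `[R_n φ] = M.reSet n [φ]` holds by `rfl`.
def reSet (n : N) (X : Set (M.W × M.A)) : Set (M.W × M.A) :=
  {x | ∀ u, M.sim x.2 x.1 u → (u, M.ext x.1 n) ∈ X}

theorem reSet_univ (n : N) : M.reSet n univ = univ := by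
  ext x
  simp [reSet]

theorem reSet_empty (n : N) : M.reSet n ∅ = ∅ :=
  eq_empty_of_forall_notMem fun ⟨w, a⟩ h => h w ((M.sim_equiv a).refl w)

theorem reSet_eq_empty_of_forall_exists_notMem {n : N} {X : Set (M.W × M.A)}
    (h : ∀ w a, ∃ u, M.sim a w u ∧ (u, M.ext w n) ∉ X) : M.reSet n X = ∅ :=
  eq_empty_of_forall_notMem fun ⟨w, a⟩ hx =>
    let ⟨u, hwu, hu⟩ := h w a
    hu (hx u hwu)

theorem truthSet_mem_of_closed {F : Set (Set (M.W × M.A))}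
    (hvar : ∀ p, M.truthSet (.var p) ∈ F) (hcompl : ∀ X ∈ F, Xᶜ ∈ F)
    (hunion : ∀ X ∈ F, ∀ Y ∈ F, X ∪ Y ∈ F) (hre : ∀ n, ∀ X ∈ F, M.reSet n X ∈ F)
    {φ : Formula P N} (hφ : φ.noDeAt) : M.truthSet φ ∈ F := by
  induction φ with
  | var p => exact hvar p
  | neg φ ih => exact hcompl _ (ih hφ)
  | disj φ ψ ihφ ihψ => exact hunion _ (ihφ hφ.1) _ (ihψ hφ.2)
  | at_ => exact hφ.elim
  | re n φ ih => exact hre n _ (ih hφ)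
  | de => exact hφ.elim

end Model

section BooleanAlgebraOfOneSet

variable {α : Type*} {S X Y : Set α}

theorem compl_mem_boolAlgOf (hX : X ∈ ({S, ∅, Sᶜ, univ} : Set (Set α))) :
    Xᶜ ∈ ({S, ∅, Sᶜ, univ} : Set (Set α)) := by
  rcases hX with rfl | rfl | rfl | rfl <;> simp

theorem union_mem_boolAlgOf (hX : X ∈ ({S, ∅, Sᶜ, univ} : Set (Set α)))
    (hY : Y ∈ ({S, ∅, Sᶜ, univ} : Set (Set α))) :
    X ∪ Y ∈ ({S, ∅, Sᶜ, univ} : Set (Set α)) := by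
  rcases hX with rfl | rfl | rfl | rfl <;> rcases hY with rfl | rfl | rfl | rfl <;>
    simp [union_comm]

end BooleanAlgebraOfOneSet

theorem M1_exists_sim_mem_and_notMem (w : M1.W) (a : M1.A) :
    ∃ u v, M1.sim a w u ∧ M1.sim a w v ∧ (u, M1.ext w ()) ∈ M1.truthSet (.var ()) ∧
      (v, M1.ext w ()) ∉ M1.truthSet (.var ()) := by
  change Fin 4 at w
  fin_cases w
  · exact ⟨(0 : Fin 4), (1 : Fin 4), rfl, rfl, Or.inl rfl,
      by rintro (h | h | h | h) <;> cases h⟩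
  · exact ⟨(1 : Fin 4), (0 : Fin 4), rfl, rfl, Or.inr (Or.inl rfl),
      by rintro (h | h | h | h) <;> cases h⟩
  · exact ⟨(3 : Fin 4), (2 : Fin 4), rfl, rfl, Or.inr (Or.inr (Or.inr rfl)),
      by rintro (h | h | h | h) <;> cases h⟩
  · exact ⟨(2 : Fin 4), (3 : Fin 4), rfl, rfl, Or.inr (Or.inr (Or.inl rfl)),
      by rintro (h | h | h | h) <;> cases h⟩

theorem M1_reSet_truthSet_var : M1.reSet () (M1.truthSet (.var ())) = ∅ :=
  M1.reSet_eq_empty_of_forall_exists_notMem fun w a =>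
    let ⟨_, v, _, hwv, _, hv⟩ := M1_exists_sim_mem_and_notMem w a
    ⟨v, hwv, hv⟩

theorem M1_reSet_compl_truthSet_var : M1.reSet () (M1.truthSet (.var ()))ᶜ = ∅ :=
  M1.reSet_eq_empty_of_forall_exists_notMem fun w a =>
    let ⟨u, _, hwu, _, hu, _⟩ := M1_exists_sim_mem_and_notMem w a
    ⟨u, hwu, not_not_intro hu⟩

/-- In M1, for every formula φ not using the modalities D and @,
⟦φ⟧ ∈ {⟦p⟧, ⟦⊥⟧, ⟦¬p⟧, ⟦⊤⟧}. -/
theorem noDeAt_truthSet_in_Fam1 (φ : Formula Unit Unit) (h : φ.noDeAt) :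
    M1.truthSet φ ∈ Fam1 := by
  refine M1.truthSet_mem_of_closed (fun _ => Or.inl rfl)
    (fun _ => compl_mem_boolAlgOf) (fun _ hX _ hY => union_mem_boolAlgOf hX hY) ?_ h
  rintro ⟨⟩ X (rfl | rfl | rfl | rfl)
  · exact Or.inr (Or.inl M1_reSet_truthSet_var)
  · exact Or.inr (Or.inl (M1.reSet_empty ()))
  · exact Or.inr (Or.inl M1_reSet_compl_truthSet_var)
  · exact Or.inr (Or.inr (Or.inr (M1.reSet_univ ())))
end

section
/- In the model M1, the truth set [D_Ann p] does not belong to the family {[p], [⊥], [¬p], [⊤]}. -/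
theorem Set.notMem_insert_empty_compl_univ {α : Type*} {S A : Set α} {x y z : α}
    (hx : x ∈ S) (hy : y ∉ S) (hz : z ∉ S) (hyA : y ∈ A) (hzA : z ∉ A) :
    S ∉ ({A, ∅, Aᶜ, Set.univ} : Set (Set α)) := by
  rintro (rfl | rfl | rfl | rfl)
  exacts [hy hyA, hx, hz hzA, hz trivial]

theorem Model.truthSet_neg {P N : Type} (M : Model P N) (φ : Formula P N) :
    M.truthSet (.neg φ) = (M.truthSet φ)ᶜ :=
  rfl

theorem M1_mem_truthSet_var_iff (w : Fin 4) (x : Fin 2) :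
    ((w, x) : M1.W × M1.A) ∈ M1.truthSet (.var ()) ↔
      (w, x) ∈ ({(0, 0), (1, 1), (2, 1), (3, 0)} : Set (Fin 4 × Fin 2)) :=
  Iff.rfl

theorem M1_mem_truthSet_de_var_iff (w : Fin 4) (x : Fin 2) :
    ((w, x) : M1.W × M1.A) ∈ M1.truthSet (.de () (.var ())) ↔ (w : ℕ) < 2 := by
  show (∀ u : Fin 4, (w : ℕ) / 2 = (u : ℕ) / 2 →
    ((u, if (u : ℕ) % 2 = 0 then 0 else 1) : Fin 4 × Fin 2) ∈
      ({(0, 0), (1, 1), (2, 1), (3, 0)} : Set (Fin 4 × Fin 2))) ↔ _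
  revert w; decide

/-- In M1, ⟦D_Ann p⟧ ∉ {⟦p⟧, ⟦⊥⟧, ⟦¬p⟧, ⟦⊤⟧}. -/
theorem de_p_not_in_Fam1 :
    M1.truthSet (.de () (.var ())) ∉ Fam1 := by
  rw [Fam1, Model.truthSet_neg]
  exact Set.notMem_insert_empty_compl_univ
    ((M1_mem_truthSet_de_var_iff 0 0).2 (by decide))
    (mt (M1_mem_truthSet_de_var_iff 2 1).1 (by decide))
    (mt (M1_mem_truthSet_de_var_iff 2 0).1 (by decide))
    ((M1_mem_truthSet_var_iff 2 1).2 (by simp))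
    (mt (M1_mem_truthSet_var_iff 2 0).1 (by simp))
end

section
/- The formula D_Ann p is not semantically equivalent to any formula of the language Φ that does not use the modalities D and @; that is, for every formula φ built only from the propositional variable p, negation, disjunction, and the modalities R_n, there exists an epistemic model with extensions in which the truth set of D_Ann p differs from the truth set of φ. -/
namespace Model

variable {P N : Type} (M : Model P N)

structure IsReBisimulation (Z : M.W × M.A → M.W × M.A → Prop) : Prop where
  val_iff : ∀ x y, Z x y → ∀ p, x ∈ M.val p ↔ y ∈ M.val p
  forth : ∀ w a v b, Z (w, a) (v, b) → ∀ n u, M.sim a w u →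
    ∃ u', M.sim b v u' ∧ Z (u, M.ext w n) (u', M.ext v n)
  back : ∀ w a v b, Z (w, a) (v, b) → ∀ n u', M.sim b v u' →
    ∃ u, M.sim a w u ∧ Z (u, M.ext w n) (u', M.ext v n)

variable {M}

theorem IsReBisimulation.sat_iff {Z : M.W × M.A → M.W × M.A → Prop}
    (hZ : M.IsReBisimulation Z) {φ : Formula P N} (hφ : φ.noDeAt) {w v : M.W} {a b : M.A}
    (h : Z (w, a) (v, b)) :
    M.sat φ w a ↔ M.sat φ v b := by
  induction φ generalizing w a v b with
  | var p => exact hZ.val_iff _ _ h p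
  | neg ψ ih => exact not_congr (ih hφ h)
  | disj ψ χ ihψ ihχ => exact or_congr (ihψ hφ.1 h) (ihχ hφ.2 h)
  | at_ => exact hφ.elim
  | de => exact hφ.elim
  | re n ψ ih =>
    constructor
    · intro hw u' hu'
      obtain ⟨u, hu, hZu⟩ := hZ.back w a v b h n u' hu'
      exact (ih hφ hZu).mp (hw u hu)
    · intro hv u hu
      obtain ⟨u', hu', hZu⟩ := hZ.forth w a v b h n u hu
      exact (ih hφ hZu).mpr (hv u' hu')

end Model

abbrev counterModel : Model Unit Unit where
  W := Fin 3
  A := Bool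
  sim a w u := a = true → (w = 2 ↔ u = 2)
  sim_equiv _ :=
    ⟨fun _ _ => Iff.rfl, fun h ha => (h ha).symm, fun h h' ha => (h ha).trans (h' ha)⟩
  ext w _ := decide (w ≠ 0)
  val _ := {x | x.1 ≠ 2 ∧ (x.2 = true ∨ x.1 = 0)}

def counterCollapse : Fin 3 × Bool → Fin 3 × Bool
  | (0, true) => (0, false)
  | (2, false) => (1, false)
  | x => x

theorem counterModel_isReBisimulation :
    counterModel.IsReBisimulation (fun x y => counterCollapse x = counterCollapse y) where
  val_iff := by decide
  forth := by decide
  back := by decide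

theorem counterModel_sat_de_var : counterModel.sat (.de () (.var ())) 0 true ∧
    ¬ counterModel.sat (.de () (.var ())) 0 false := by
  simp only [Model.sat]
  decide

/-- D_Ann p is not semantically equivalent to any formula that does
not use the modalities D and @: for every such formula φ there is an epistemic
model with extensions in which ⟦D_Ann p⟧ ≠ ⟦φ⟧. -/
theorem de_undefinable_via_re (φ : Formula Unit Unit) (h : φ.noDeAt) :
    ∃ M : Model Unit Unit, M.truthSet (.de () (.var ())) ≠ M.truthSet φ := by
  refine ⟨counterModel, fun heq => counterModel_sat_de_var.2 ?_⟩
  have hD : ∀ w a, counterModel.sat (.de () (.var ())) w a ↔ counterModel.sat φ w a :=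
    fun w a => Set.ext_iff.mp heq (w, a)
  have hφ : counterModel.sat φ 0 true ↔ counterModel.sat φ 0 false :=
    counterModel_isReBisimulation.sat_iff h rfl
  exact (hD 0 false).mpr (hφ.mp ((hD 0 true).mp counterModel_sat_de_var.1))
end

section
/- In the semantics with agent-specific names, if the language contains a name constant 'se' (self) and a model satisfies e^a_w(se) = a for every agent a and every world w, then for any world w, agent a, name n, and formula φ, it holds that w,a ⊨ D_n φ if and only if w,a ⊨ R_se @_n φ. -/
/-- An epistemic model with agent-specific extensions. -/
structure ModelA (P N : Type) where
  W : Type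
  A : Type
  sim : A → W → W → Prop
  sim_equiv : ∀ a, Equivalence (sim a)
  ext : W → A → N → A
  val : P → Set (W × A)

/-- The satisfaction relation `w, a ⊨ φ` for agent-specific extensions. -/
def ModelA.sat {P N : Type} (M : ModelA P N) : Formula P N → M.W → M.A → Prop
  | .var p, w, a => (w, a) ∈ M.val p
  | .neg φ, w, a => ¬ M.sat φ w a
  | .disj φ ψ, w, a => M.sat φ w a ∨ M.sat ψ w a
  | .at_ n φ, w, a => M.sat φ w (M.ext w a n)
  | .re n φ, w, a => ∀ u, M.sim a w u → M.sat φ u (M.ext w a n)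
  | .de n φ, w, a => ∀ u, M.sim a w u → M.sat φ u (M.ext u a n)

/-- The truth set ⟦φ⟧ of a formula, agent-specific setting. -/
def ModelA.truthSet {P N : Type} (M : ModelA P N) (φ : Formula P N) : Set (M.W × M.A) :=
  {x | M.sat φ x.1 x.2}

/-- With agent-specific names, if the model has a name constant
`se` (self) with e^a_w(se) = a for all a, w, then w,a ⊨ Dₙφ iff w,a ⊨ R_se @ₙφ. -/
theorem de_definable_with_self (P N : Type) (M : ModelA P N) (se : N)
    (hse : ∀ (w : M.W) (a : M.A), M.ext w a se = a)
    (w : M.W) (a : M.A) (n : N) (φ : Formula P N) :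
    M.sat (.de n φ) w a ↔ M.sat (.re se (.at_ n φ)) w a := by
  simp only [ModelA.sat, hse]
end
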